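/- In the twisted Heisenberg-Virasoro Verma module with c_I = 0, c_{L,I} ≠ 0 and h_I = 3c_{L,I} (so p = 2), the vector (I(-2) - (1/c_{L,I})I(-1)²)·v is a singular vector, and equals (up to the nonzero scalar 1/(2c_{L,I}²) adjustment) S_2(-I(-1)/c_{L,I}, -I(-2)/c_{L,I})·v where S_2(x_1, x_2) = (x_1² + x_2)/2. -/

import Mathlib

/-- The Schur polynomials `S_r(x_1, x_2, ...)`, defined as the coefficients of the
generating function `exp (∑_{n ≥ 1} (x_n/n) y^n) = ∑_{r ≥ 0} S_r y^r`.  Since the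
series `g = ∑_{n ≥ 1} (x_n/n) y^n` has zero constant term, the coefficient of `y^r`
in `exp g = ∑_k g^k / k!` only receives contributions from `k ≤ r`. -/
noncomputable def schur {A : Type*} [Ring A] [Algebra ℂ A] (x : ℕ → A) (r : ℕ) : A :=
  ∑ k ∈ Finset.range (r + 1),
    ((Nat.factorial k : ℂ)⁻¹) •
      (PowerSeries.coeff (R := A) r
        ((PowerSeries.mk fun n => if n = 0 then 0 else ((n : ℂ)⁻¹) • x n) ^ k))

/-- The generalized binomial coefficient `binom(z, r) = z(z-1)⋯(z-r+1)/r!`. -/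
noncomputable def cchoose (z : ℂ) (r : ℕ) : ℂ :=
  (∏ i ∈ Finset.range r, (z - i)) / (Nat.factorial r)


/-- A representation of the twisted Heisenberg-Virasoro algebra `HVir` at level zero
(`C_I` acts by `0`), with the central elements `C_L`, `C_{LI}` acting by the scalars
`cL`, `cLI`. -/
structure HVirRep (V : Type*) [AddCommGroup V] [Module ℂ V] where
  L : ℤ → Module.End ℂ V
  I : ℤ → Module.End ℂ V
  cL : ℂ
  cLI : ℂ
  rel_LL : ∀ n m : ℤ, L n * L m - L m * L n =
    ((n : ℂ) - m) • L (n + m) +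
      (if n + m = 0 then (((n : ℂ) ^ 3 - n) / 12) * cL else 0) • (1 : Module.End ℂ V)
  rel_LI : ∀ n m : ℤ, L n * I m - I m * L n =
    (-(m : ℂ)) • I (n + m) -
      (if n + m = 0 then ((n : ℂ) ^ 2 + n) * cLI else 0) • (1 : Module.End ℂ V)
  rel_II : ∀ n m : ℤ, I n * I m = I m * I n

/-! Commute each positive mode past `I(-2)` and `I(-1)²` until it reaches the singular vector
`v`. For `I(n)` and for `L(n)`, `n ≥ 3`, every resulting term vanishes. For `L(1)` and `L(2)`
the surviving terms cancel exactly because `I(0)v = 3 c_{L,I} v`: `L(1)Ω` is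
`2 I(-1)v - c_{L,I}⁻¹ · 2c_{L,I} I(-1)v`, and `L(2)Ω` is `2 I(0)v - 6 c_{L,I} v`. -/

theorem schur_two {A : Type*} [Ring A] [Algebra ℂ A] (x : ℕ → A) :
    schur x 2 = (2 : ℂ)⁻¹ • x 2 + (2 : ℂ)⁻¹ • (x 1 * x 1) := by
  unfold schur
  rw [Finset.sum_range_succ, Finset.sum_range_succ, Finset.sum_range_one, pow_two,
    PowerSeries.coeff_mul, Finset.Nat.sum_antidiagonal_eq_sum_range_succ_mk]
  simp [Finset.sum_range_succ, Nat.factorial, smul_smul]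

namespace HVirRep

variable {V : Type*} [AddCommGroup V] [Module ℂ V] (ρ : HVirRep V)

def IsSingular (w : V) : Prop :=
  ∀ n : ℤ, 0 < n → ρ.L n w = 0 ∧ ρ.I n w = 0

noncomputable def omega (v : V) : V :=
  ρ.I (-2) v - ρ.cLI⁻¹ • ρ.I (-1) (ρ.I (-1) v)

theorem L_I_apply (n m : ℤ) (w : V) :
    ρ.L n (ρ.I m w) = ρ.I m (ρ.L n w) - (m : ℂ) • ρ.I (n + m) w -
      (if n + m = 0 then ((n : ℂ) ^ 2 + n) * ρ.cLI else 0) • w := by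
  have h := congrArg (fun f : Module.End ℂ V => f w) (ρ.rel_LI n m)
  simp only [LinearMap.sub_apply, Module.End.mul_apply, LinearMap.smul_apply,
    Module.End.one_apply] at h
  rw [sub_eq_iff_eq_add.mp h]
  module

theorem I_I_apply (n m : ℤ) (w : V) : ρ.I n (ρ.I m w) = ρ.I m (ρ.I n w) :=
  congrArg (fun f : Module.End ℂ V => f w) (ρ.rel_II n m)

variable {ρ} {v : V}

theorem IsSingular.L_I_apply (hv : ρ.IsSingular v) {n : ℤ} (hn : 0 < n) (m : ℤ) :
    ρ.L n (ρ.I m v) = -(m : ℂ) • ρ.I (n + m) v -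
      (if n + m = 0 then ((n : ℂ) ^ 2 + n) * ρ.cLI else 0) • v := by
  rw [ρ.L_I_apply, (hv n hn).1, map_zero, zero_sub, neg_smul]

theorem IsSingular.I_omega (hv : ρ.IsSingular v) {n : ℤ} (hn : 0 < n) :
    ρ.I n (ρ.omega v) = 0 := by
  rw [omega, map_sub, map_smul, ρ.I_I_apply n, ρ.I_I_apply n, ρ.I_I_apply n, (hv n hn).2]
  simp

theorem IsSingular.L_one_omega (hv : ρ.IsSingular v) (hI0 : ρ.I 0 v = (3 * ρ.cLI) • v)
    (hc : ρ.cLI ≠ 0) : ρ.L 1 (ρ.omega v) = 0 := by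
  have hI : ρ.L 1 (ρ.I (-1) v) = ρ.cLI • v := by
    rw [hv.L_I_apply one_pos]
    norm_num [hI0]
    module
  have hI2 : ρ.L 1 (ρ.I (-1) (ρ.I (-1) v)) = (2 * ρ.cLI) • ρ.I (-1) v := by
    rw [ρ.L_I_apply, hI, ρ.I_I_apply _ (-1)]
    norm_num [hI0]
    module
  rw [omega, map_sub, map_smul, hI2, hv.L_I_apply one_pos, smul_smul,
    mul_left_comm, inv_mul_cancel₀ hc]
  norm_num

theorem IsSingular.L_two_omega (hv : ρ.IsSingular v) (hI0 : ρ.I 0 v = (3 * ρ.cLI) • v) :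
    ρ.L 2 (ρ.omega v) = 0 := by
  have hI : ρ.L 2 (ρ.I (-1) v) = 0 := by
    norm_num [hv.L_I_apply two_pos, (hv 1 one_pos).2]
  have hI2 : ρ.L 2 (ρ.I (-1) (ρ.I (-1) v)) = 0 := by
    norm_num [ρ.L_I_apply, hI, ρ.I_I_apply _ (-1), hv 1 one_pos, hv 2 two_pos]
  rw [omega, map_sub, map_smul, hI2, hv.L_I_apply two_pos]
  norm_num [hI0]
  module

theorem IsSingular.L_omega_of_three_le (hv : ρ.IsSingular v) {n : ℤ} (hn : 3 ≤ n) :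
    ρ.L n (ρ.omega v) = 0 := by
  have hI : ρ.L n (ρ.I (-1) v) = 0 := by
    rw [hv.L_I_apply (by omega), (hv (n + -1) (by omega)).2, if_neg (by omega)]
    simp
  rw [omega, map_sub, map_smul, ρ.L_I_apply n (-1), hI, ρ.I_I_apply _ (-1),
    (hv (n + -1) (by omega)).2, hv.L_I_apply (by omega), (hv (n + -2) (by omega)).2,
    if_neg (by omega), if_neg (by omega)]
  simp

theorem IsSingular.isSingular_omega (hv : ρ.IsSingular v) (hI0 : ρ.I 0 v = (3 * ρ.cLI) • v)
    (hc : ρ.cLI ≠ 0) : ρ.IsSingular (ρ.omega v) := by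
  intro n hn
  refine ⟨?_, hv.I_omega hn⟩
  obtain rfl | rfl | hn3 : n = 1 ∨ n = 2 ∨ 3 ≤ n := by omega
  · exact hv.L_one_omega hI0 hc
  · exact hv.L_two_omega hI0
  · exact hv.L_omega_of_three_le hn3

theorem omega_eq_smul_schur (hc : ρ.cLI ≠ 0) (v : V) :
    ρ.omega v = (-2 * ρ.cLI) • schur (fun j => (-ρ.cLI⁻¹) • ρ.I (-(j : ℤ))) 2 v := by
  rw [schur_two]
  simp only [omega, LinearMap.add_apply, LinearMap.smul_apply, Module.End.mul_apply, map_smul,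
    Nat.cast_ofNat, Nat.cast_one, smul_smul]
  match_scalars <;> field_simp

end HVirRep

theorem singular_vector_hI_three_cLI_general {V : Type*} [AddCommGroup V] [Module ℂ V]
    (ρ : HVirRep V) (v : V) (hc : ρ.cLI ≠ 0)
    (hLv : ∀ n : ℤ, 0 < n → ρ.L n v = 0) (hIv : ∀ n : ℤ, 0 < n → ρ.I n v = 0)
    (hI0 : ρ.I 0 v = (3 * ρ.cLI) • v) :
    (∀ n : ℤ, 1 ≤ n →
        ρ.L n (ρ.I (-2) v - (ρ.cLI)⁻¹ • ρ.I (-1) (ρ.I (-1) v)) = 0 ∧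
        ρ.I n (ρ.I (-2) v - (ρ.cLI)⁻¹ • ρ.I (-1) (ρ.I (-1) v)) = 0) ∧
      ρ.I (-2) v - (ρ.cLI)⁻¹ • ρ.I (-1) (ρ.I (-1) v) =
        (-2 * ρ.cLI) • ((schur (fun j => (-(ρ.cLI)⁻¹) • ρ.I (-(j : ℤ))) 2) v) := by
  have hv : ρ.IsSingular v := fun n hn => ⟨hLv n hn, hIv n hn⟩
  exact ⟨fun n hn => hv.isSingular_omega hI0 hc n hn, ρ.omega_eq_smul_schur hc v⟩

/-- In any highest weight representation of the twisted Heisenberg-Virasoro algebra at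
level zero with `c_{L,I} ≠ 0` and highest weight `(h, h_I) = (h, 3c_{L,I})` (so `p = 2`),
the vector `Ω = (I(-2) - (1/c_{L,I}) I(-1)²) v` is a singular vector
(`L(n)Ω = I(n)Ω = 0` for all `n ≥ 1`), and it equals
`-2c_{L,I} · S_2(-I(-1)/c_{L,I}, -I(-2)/c_{L,I}) v`, where `S_2(x₁,x₂) = (x₁² + x₂)/2`,
i.e. it agrees with the Schur-polynomial singular vector up to a nonzero scalar. -/
theorem singular_vector_hI_three_cLI {V : Type*} [AddCommGroup V] [Module ℂ V]
    (ρ : HVirRep V) (v : V) (h : ℂ) (hc : ρ.cLI ≠ 0)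
    (hLv : ∀ n : ℤ, 0 < n → ρ.L n v = 0) (hIv : ∀ n : ℤ, 0 < n → ρ.I n v = 0)
    (hL0 : ρ.L 0 v = h • v) (hI0 : ρ.I 0 v = (3 * ρ.cLI) • v) :
    (∀ n : ℤ, 1 ≤ n →
        ρ.L n (ρ.I (-2) v - (ρ.cLI)⁻¹ • ρ.I (-1) (ρ.I (-1) v)) = 0 ∧
        ρ.I n (ρ.I (-2) v - (ρ.cLI)⁻¹ • ρ.I (-1) (ρ.I (-1) v)) = 0) ∧
      ρ.I (-2) v - (ρ.cLI)⁻¹ • ρ.I (-1) (ρ.I (-1) v) =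
        (-2 * ρ.cLI) • ((schur (fun j => (-(ρ.cLI)⁻¹) • ρ.I (-(j : ℤ))) 2) v) :=
  singular_vector_hI_three_cLI_general ρ v hc hLv hIv hI0
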